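/- arXiv:1601.01567 — 2 statements merged into one kernel-verified Lean document; each statement's English description precedes it below -/
import Mathlib

section
/- Let f : (0,π) → ℝ be defined by f(θ) = e^{-w(θ)} = 2/(1 - cos θ). Then (1/f)·(1 - Δ̊ log f) = 0 on (0, π), where Δ̊ log f means (log f)'' + cot(θ)·(log f)'. In particular the null expansion tr χ̃ = (2/f)(1 - Δ̊ log f) of the corresponding section of the lightcone vanishes identically. -/
/-!
With `f = 2 / (1 - cos θ)` one has `(log f)' = -sin θ / (1 - cos θ)` and, using
`sin² + cos² = 1`, `(log f)'' = 1 / (1 - cos θ)`. Hence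
`Δ̊ log f = (1 - cos θ) / (1 - cos θ) = 1`, and both expressions vanish.
-/

open Real

theorem Real.cos_ne_one_of_sin_ne_zero {θ : ℝ} (h : sin θ ≠ 0) : cos θ ≠ 1 :=
  fun h1 => h (sin_eq_zero_iff_cos_eq.2 (Or.inl h1))

theorem hasDerivAt_log_two_div_one_sub_cos {θ : ℝ} (h : cos θ ≠ 1) :
    HasDerivAt (fun θ : ℝ => log (2 / (1 - cos θ))) (-sin θ / (1 - cos θ)) θ := by
  have hne : 1 - cos θ ≠ 0 := sub_ne_zero.2 h.symm
  have hquot := (hasDerivAt_const θ (2 : ℝ)).fun_div ((hasDerivAt_cos θ).const_sub 1) hne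
  refine (hquot.log (div_ne_zero two_ne_zero hne)).congr_deriv ?_
  field_simp
  ring

theorem hasDerivAt_neg_sin_div_one_sub_cos {θ : ℝ} (h : cos θ ≠ 1) :
    HasDerivAt (fun θ : ℝ => -sin θ / (1 - cos θ)) (1 / (1 - cos θ)) θ := by
  have hne : 1 - cos θ ≠ 0 := sub_ne_zero.2 h.symm
  refine ((hasDerivAt_sin θ).fun_neg.fun_div ((hasDerivAt_cos θ).const_sub 1) hne).congr_deriv ?_
  field_simp
  linear_combination sin_sq_add_cos_sq θ

theorem deriv_log_two_div_one_sub_cos {θ : ℝ} (h : cos θ ≠ 1) :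
    deriv (fun θ : ℝ => log (2 / (1 - cos θ))) θ = -sin θ / (1 - cos θ) :=
  (hasDerivAt_log_two_div_one_sub_cos h).deriv

theorem deriv_deriv_log_two_div_one_sub_cos {θ : ℝ} (h : cos θ ≠ 1) :
    deriv (deriv fun θ : ℝ => log (2 / (1 - cos θ))) θ = 1 / (1 - cos θ) := by
  have hopen : IsOpen {x : ℝ | cos x ≠ 1} := isOpen_ne_fun continuous_cos continuous_const
  have hderiv : deriv (fun θ : ℝ => log (2 / (1 - cos θ))) =ᶠ[nhds θ]
      fun x => -sin x / (1 - cos x) := by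
    filter_upwards [hopen.mem_nhds h] with x hx
    exact deriv_log_two_div_one_sub_cos hx
  rw [hderiv.deriv_eq]
  exact (hasDerivAt_neg_sin_div_one_sub_cos h).deriv

theorem sphericalLaplacian_log_two_div_one_sub_cos {θ : ℝ} (h : sin θ ≠ 0) :
    deriv (deriv fun θ : ℝ => log (2 / (1 - cos θ))) θ
      + cos θ / sin θ * deriv (fun θ : ℝ => log (2 / (1 - cos θ))) θ = 1 := by
  have hcos := cos_ne_one_of_sin_ne_zero h
  have hne : 1 - cos θ ≠ 0 := sub_ne_zero.2 hcos.symm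
  rw [deriv_deriv_log_two_div_one_sub_cos hcos, deriv_log_two_div_one_sub_cos hcos]
  field_simp
  ring

/-- For `f θ = 2 / (1 - cos θ)` on `(0, π)`, the quantity
`(1/f) (1 - Δ̊ log f)` vanishes, where `Δ̊ h = h'' + cot θ · h'`.
Hence the null expansion `tr χ̃ = (2/f)(1 - Δ̊ log f)` of the section `S_f`
of the lightcone vanishes identically. -/
theorem null_expansion_of_stereographic_section_vanishes :
    ∀ θ ∈ Set.Ioo (0 : ℝ) π,
      (1 / ((fun θ : ℝ => 2 / (1 - Real.cos θ)) θ)) *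
        (1 - (deriv (deriv (fun θ : ℝ => Real.log (2 / (1 - Real.cos θ)))) θ
          + Real.cos θ / Real.sin θ *
            deriv (fun θ : ℝ => Real.log (2 / (1 - Real.cos θ))) θ)) = 0 ∧
      (2 / ((fun θ : ℝ => 2 / (1 - Real.cos θ)) θ)) *
        (1 - (deriv (deriv (fun θ : ℝ => Real.log (2 / (1 - Real.cos θ)))) θ
          + Real.cos θ / Real.sin θ *
            deriv (fun θ : ℝ => Real.log (2 / (1 - Real.cos θ))) θ)) = 0 := by
  intro θ hθ
  have hsin : sin θ ≠ 0 := (sin_pos_of_pos_of_lt_pi hθ.1 hθ.2).ne'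
  rw [sphericalLaplacian_log_two_div_one_sub_cos hsin, sub_self]
  exact ⟨mul_zero _, mul_zero _⟩
end

section
/- Let g : ℝ → ℝ be smooth with g ≡ 1 on [0,1], g ≡ 0 on [2,∞), 0 ≤ g ≤ 1, and |g'|, |g''| bounded. For ε ∈ (0, 1/4), set u_ε(θ) = -(1 - g(θ/ε))(1+ε)w(θ) - g(θ/ε)(1+ε)w(ε) for θ ∈ (0, 2ε], where w(θ) = 2 log sin(θ/2). Then there is a constant C (independent of ε) such that |u_ε''(θ) + cot θ·u_ε'(θ)| ≤ C·ε⁻²·|log ε| for all θ ∈ (0, 2ε]. -/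
open Real

/-- The interpolated logarithmic profile of the glued surface in the anisotropic
trapped surface construction. -/
noncomputable def gluedProfile (g : ℝ → ℝ) (ε : ℝ) : ℝ → ℝ := fun θ =>
  -((1 - g (θ / ε)) * ((1 + ε) * (2 * Real.log (Real.sin (θ / 2)))))
    - g (θ / ε) * ((1 + ε) * (2 * Real.log (Real.sin (ε / 2))))

lemma half_le_sin {x : ℝ} (h0 : 0 ≤ x) (h1 : x ≤ 1) : x / 2 ≤ Real.sin x := by
  have h2 : x ≤ π / 2 := le_trans h1 (by nlinarith [Real.pi_gt_three])
  have h3 := Real.mul_le_sin h0 h2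
  have hπ := Real.pi_le_four
  have hπ0 := Real.pi_pos
  have key : x / 2 ≤ 2 / π * x := by
    rw [div_mul_eq_mul_div, div_le_div_iff₀ (by norm_num) hπ0]
    nlinarith
  linarith

lemma hasDerivAt_W {θ : ℝ} (h0 : 0 < θ) (h1 : θ < 1) :
    HasDerivAt (fun t => 2 * Real.log (Real.sin (t / 2)))
      (Real.cos (θ / 2) / Real.sin (θ / 2)) θ := by
  have hs : 0 < Real.sin (θ / 2) :=
    Real.sin_pos_of_pos_of_lt_pi (by linarith) (by nlinarith [Real.pi_gt_three])
  have h3 : HasDerivAt (fun t : ℝ => Real.sin (t / 2)) (Real.cos (θ / 2) * (1 / 2)) θ := by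
    have := (Real.hasDerivAt_sin (θ / 2)).comp θ ((hasDerivAt_id θ).div_const 2); exact this
  have h4 : HasDerivAt (fun t => 2 * Real.log (Real.sin (t / 2))) _ θ :=
    (h3.log hs.ne').const_mul (2 : ℝ)
  convert h4 using 1
  field_simp

lemma hasDerivAt_W1 {θ : ℝ} (h0 : 0 < θ) (h1 : θ < 1) :
    HasDerivAt (fun t => Real.cos (t / 2) / Real.sin (t / 2))
      (-(1 / (2 * Real.sin (θ / 2) ^ 2))) θ := by
  have hs : 0 < Real.sin (θ / 2) :=
    Real.sin_pos_of_pos_of_lt_pi (by linarith) (by nlinarith [Real.pi_gt_three])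
  have hc : HasDerivAt (fun t : ℝ => Real.cos (t / 2)) (-Real.sin (θ / 2) * (1 / 2)) θ := by
    have := (Real.hasDerivAt_cos (θ / 2)).comp θ ((hasDerivAt_id θ).div_const 2); exact this
  have hd : HasDerivAt (fun t : ℝ => Real.sin (t / 2)) (Real.cos (θ / 2) * (1 / 2)) θ := by
    have := (Real.hasDerivAt_sin (θ / 2)).comp θ ((hasDerivAt_id θ).div_const 2); exact this
  have h : HasDerivAt (fun t => Real.cos (t / 2) / Real.sin (t / 2)) _ θ := hc.div hd hs.ne'
  convert h using 1
  have hpy := Real.sin_sq_add_cos_sq (θ / 2)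
  field_simp
  nlinarith [hpy]


/-- First derivative of the glued profile, in closed form. -/
lemma gluedProfile_hasDerivAt (g : ℝ → ℝ) (hg : ContDiff ℝ (⊤ : ℕ∞) g) {ε : ℝ} (hε : 0 < ε)
    {t : ℝ} (h0 : 0 < t) (h1 : t < 1) :
    HasDerivAt (gluedProfile g ε)
      (-(-(deriv g (t / ε) * (1 / ε)) * ((1 + ε) * (2 * Real.log (Real.sin (t / 2))))
          + (1 - g (t / ε)) * ((1 + ε) * (Real.cos (t / 2) / Real.sin (t / 2))))
        - deriv g (t / ε) * (1 / ε) * ((1 + ε) * (2 * Real.log (Real.sin (ε / 2))))) t := by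
  have hGd : HasDerivAt (fun s : ℝ => g (s / ε)) (deriv g (t / ε) * (1 / ε)) t :=
    ((hg.differentiable (by simp) (t / ε)).hasDerivAt).comp t ((hasDerivAt_id t).div_const ε)
  have h1' : HasDerivAt
      (fun s : ℝ => (1 - g (s / ε)) * ((1 + ε) * (2 * Real.log (Real.sin (s / 2)))))
      (-(deriv g (t / ε) * (1 / ε)) * ((1 + ε) * (2 * Real.log (Real.sin (t / 2))))
        + (1 - g (t / ε)) * ((1 + ε) * (Real.cos (t / 2) / Real.sin (t / 2)))) t :=
    (hGd.const_sub 1).mul ((hasDerivAt_W h0 h1).const_mul (1 + ε))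
  have h2' : HasDerivAt
      (fun s : ℝ => g (s / ε) * ((1 + ε) * (2 * Real.log (Real.sin (ε / 2)))))
      (deriv g (t / ε) * (1 / ε) * ((1 + ε) * (2 * Real.log (Real.sin (ε / 2))))) t :=
    hGd.mul_const _
  exact (h1'.neg).sub h2'

/-- Second derivative: derivative of the closed-form first derivative. -/
lemma gluedProfile_hasDerivAt2 (g : ℝ → ℝ) (hg : ContDiff ℝ (⊤ : ℕ∞) g) {ε : ℝ} (hε : 0 < ε)
    {t : ℝ} (h0 : 0 < t) (h1 : t < 1) :
    HasDerivAt (fun s =>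
      -(-(deriv g (s / ε) * (1 / ε)) * ((1 + ε) * (2 * Real.log (Real.sin (s / 2))))
          + (1 - g (s / ε)) * ((1 + ε) * (Real.cos (s / 2) / Real.sin (s / 2))))
        - deriv g (s / ε) * (1 / ε) * ((1 + ε) * (2 * Real.log (Real.sin (ε / 2)))))
      (-((-(deriv (deriv g) (t / ε) * (1 / ε) * (1 / ε)))
            * ((1 + ε) * (2 * Real.log (Real.sin (t / 2))))
          + (-(deriv g (t / ε) * (1 / ε)))
            * ((1 + ε) * (Real.cos (t / 2) / Real.sin (t / 2)))
          + ((-(deriv g (t / ε) * (1 / ε)))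
              * ((1 + ε) * (Real.cos (t / 2) / Real.sin (t / 2)))
            + (1 - g (t / ε)) * ((1 + ε) * (-(1 / (2 * Real.sin (t / 2) ^ 2))))))
        - deriv (deriv g) (t / ε) * (1 / ε) * (1 / ε)
            * ((1 + ε) * (2 * Real.log (Real.sin (ε / 2))))) t := by
  have hg' : Differentiable ℝ (deriv g) :=
    ((contDiff_infty_iff_deriv.mp (hg.of_le (by simp))).2).differentiable (by simp)
  have hGd : HasDerivAt (fun s : ℝ => g (s / ε)) (deriv g (t / ε) * (1 / ε)) t :=
    ((hg.differentiable (by simp) (t / ε)).hasDerivAt).comp t ((hasDerivAt_id t).div_const ε)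
  have hG'd : HasDerivAt (fun s : ℝ => deriv g (s / ε)) (deriv (deriv g) (t / ε) * (1 / ε)) t := by
    have := ((hg' (t / ε)).hasDerivAt).comp t ((hasDerivAt_id t).div_const ε); exact this
  have hA : HasDerivAt
      (fun s : ℝ => -(deriv g (s / ε) * (1 / ε)) * ((1 + ε) * (2 * Real.log (Real.sin (s / 2)))))
      ((-(deriv (deriv g) (t / ε) * (1 / ε) * (1 / ε)))
          * ((1 + ε) * (2 * Real.log (Real.sin (t / 2))))
        + (-(deriv g (t / ε) * (1 / ε)))
          * ((1 + ε) * (Real.cos (t / 2) / Real.sin (t / 2)))) t :=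
    ((hG'd.mul_const (1 / ε)).neg).mul ((hasDerivAt_W h0 h1).const_mul (1 + ε))
  have hB : HasDerivAt
      (fun s : ℝ => (1 - g (s / ε)) * ((1 + ε) * (Real.cos (s / 2) / Real.sin (s / 2))))
      ((-(deriv g (t / ε) * (1 / ε)))
          * ((1 + ε) * (Real.cos (t / 2) / Real.sin (t / 2)))
        + (1 - g (t / ε)) * ((1 + ε) * (-(1 / (2 * Real.sin (t / 2) ^ 2))))) t :=
    (hGd.const_sub 1).mul ((hasDerivAt_W1 h0 h1).const_mul (1 + ε))
  have hC : HasDerivAt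
      (fun s : ℝ => deriv g (s / ε) * (1 / ε) * ((1 + ε) * (2 * Real.log (Real.sin (ε / 2)))))
      (deriv (deriv g) (t / ε) * (1 / ε) * (1 / ε)
        * ((1 + ε) * (2 * Real.log (Real.sin (ε / 2))))) t :=
    (hG'd.mul_const (1 / ε)).mul_const _
  exact ((hA.add hB).neg).sub hC

lemma abs_mul_le {x y bx by' : ℝ} (hx : |x| ≤ bx) (hy : |y| ≤ by') :
    |x * y| ≤ bx * by' := by
  rw [abs_mul]
  exact mul_le_mul hx hy (abs_nonneg _) (le_trans (abs_nonneg _) hx)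

lemma log_four_le_two : Real.log 4 ≤ 2 := by
  rw [Real.log_le_iff_le_exp (by norm_num),
    show (2 : ℝ) = 1 + 1 by norm_num, Real.exp_add]
  nlinarith [Real.exp_one_gt_d9]

set_option maxHeartbeats 1000000 in
/-- Bound on the spherical Laplacian of the glued profile:
`|u_ε'' + cot θ · u_ε'| ≤ C ε⁻² |log ε|` on `(0, 2ε]`, with `C` independent of `ε`. -/
theorem glued_profile_laplacian_bound (g : ℝ → ℝ) (hg : ContDiff ℝ (⊤ : ℕ∞) g)
    (hg1 : ∀ x ∈ Set.Icc (0 : ℝ) 1, g x = 1)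
    (hg0 : ∀ x ∈ Set.Ici (2 : ℝ), g x = 0)
    (hgb : ∀ x, 0 ≤ g x ∧ g x ≤ 1)
    (M : ℝ) (hM : ∀ x, |deriv g x| ≤ M ∧ |deriv (deriv g) x| ≤ M) :
    ∃ C : ℝ, 0 < C ∧ ∀ ε ∈ Set.Ioo (0 : ℝ) (1 / 4), ∀ θ ∈ Set.Ioc (0 : ℝ) (2 * ε),
      |deriv (deriv (gluedProfile g ε)) θ
          + Real.cos θ / Real.sin θ * deriv (gluedProfile g ε) θ|
        ≤ C * ε⁻¹ ^ 2 * |Real.log ε| := by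
  have hM0 : 0 ≤ M := le_trans (abs_nonneg _) (hM 0).1
  refine ⟨100 * (M + 1), by positivity, ?_⟩
  rintro ε ⟨hε0, hε4⟩ θ ⟨hθ0, hθ2⟩
  have hεinv : 0 < ε⁻¹ := inv_pos.mpr hε0
  have hlogε : Real.log ε ≤ -1 := by
    rw [Real.log_le_iff_le_exp hε0, Real.exp_neg,
      le_inv_comm₀ hε0 (Real.exp_pos 1)]
    have h4 : Real.exp 1 ≤ 4 := by nlinarith [Real.exp_one_lt_d9]
    have h5 : (4 : ℝ) ≤ ε⁻¹ := by
      rw [show (4:ℝ) = (1/4 : ℝ)⁻¹ by norm_num]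
      exact inv_anti₀ hε0 (le_of_lt hε4)
    linarith
  have hL1 : (1 : ℝ) ≤ |Real.log ε| := by
    rw [abs_of_nonpos (by linarith)]; linarith
  rcases lt_or_ge θ ε with hcase | hcase
  · -- θ < ε : the profile is locally constant
    have hmem : Set.Ioo (0 : ℝ) ε ∈ nhds θ := Ioo_mem_nhds hθ0 hcase
    have hconst : gluedProfile g ε =ᶠ[nhds θ]
        fun _ => -((1 + ε) * (2 * Real.log (Real.sin (ε / 2)))) := by
      filter_upwards [hmem] with t ht
      have hg1' : g (t / ε) = 1 :=
        hg1 _ ⟨le_of_lt (div_pos ht.1 hε0), le_of_lt ((div_lt_one hε0).mpr ht.2)⟩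
      simp [gluedProfile, hg1']
    have hda : deriv (gluedProfile g ε) θ = 0 := by
      rw [hconst.deriv_eq]; simp
    have hdb : deriv (deriv (gluedProfile g ε)) θ = 0 := by
      rw [(hconst.deriv).deriv_eq]
      simp
    rw [hda, hdb]
    simp only [mul_zero, add_zero, abs_zero]
    positivity
  · -- ε ≤ θ : explicit derivative computation and bounds
    have hθ1 : θ < 1 := by linarith
    have hderiv : deriv (gluedProfile g ε) =ᶠ[nhds θ] fun t =>
        -(-(deriv g (t / ε) * (1 / ε)) * ((1 + ε) * (2 * Real.log (Real.sin (t / 2))))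
            + (1 - g (t / ε)) * ((1 + ε) * (Real.cos (t / 2) / Real.sin (t / 2))))
          - deriv g (t / ε) * (1 / ε) * ((1 + ε) * (2 * Real.log (Real.sin (ε / 2)))) := by
      filter_upwards [Ioo_mem_nhds hθ0 hθ1] with t ht
      exact (gluedProfile_hasDerivAt g hg hε0 ht.1 ht.2).deriv
    have hda : deriv (gluedProfile g ε) θ
        = -(-(deriv g (θ / ε) * (1 / ε)) * ((1 + ε) * (2 * Real.log (Real.sin (θ / 2))))
            + (1 - g (θ / ε)) * ((1 + ε) * (Real.cos (θ / 2) / Real.sin (θ / 2))))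
          - deriv g (θ / ε) * (1 / ε) * ((1 + ε) * (2 * Real.log (Real.sin (ε / 2)))) :=
      (gluedProfile_hasDerivAt g hg hε0 hθ0 hθ1).deriv
    have hdb : deriv (deriv (gluedProfile g ε)) θ
        = -((-(deriv (deriv g) (θ / ε) * (1 / ε) * (1 / ε)))
              * ((1 + ε) * (2 * Real.log (Real.sin (θ / 2))))
            + (-(deriv g (θ / ε) * (1 / ε)))
              * ((1 + ε) * (Real.cos (θ / 2) / Real.sin (θ / 2)))
            + ((-(deriv g (θ / ε) * (1 / ε)))
                * ((1 + ε) * (Real.cos (θ / 2) / Real.sin (θ / 2)))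
              + (1 - g (θ / ε)) * ((1 + ε) * (-(1 / (2 * Real.sin (θ / 2) ^ 2))))))
          - deriv (deriv g) (θ / ε) * (1 / ε) * (1 / ε)
              * ((1 + ε) * (2 * Real.log (Real.sin (ε / 2)))) := by
      rw [hderiv.deriv_eq]
      exact (gluedProfile_hasDerivAt2 g hg hε0 hθ0 hθ1).deriv
    rw [hda, hdb]
    clear hda hdb hderiv
    set d1 := deriv g (θ / ε) * (1 / ε) with hd1def
    set d2 := deriv (deriv g) (θ / ε) * (1 / ε) * (1 / ε) with hd2def
    set Wv := 2 * Real.log (Real.sin (θ / 2)) with hWdef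
    set cv := 2 * Real.log (Real.sin (ε / 2)) with hcdef
    set W1v := Real.cos (θ / 2) / Real.sin (θ / 2) with hW1def
    set W2v := -(1 / (2 * Real.sin (θ / 2) ^ 2)) with hW2def
    set Gv := g (θ / ε) with hGdef
    set ct := Real.cos θ / Real.sin θ with hctdef
    set L := |Real.log ε| with hLdef
    have hspos : 0 < Real.sin (θ / 2) :=
      Real.sin_pos_of_pos_of_lt_pi (by linarith only [hθ0])
        (by linarith only [Real.pi_gt_three, hθ1])
    have hsθpos : 0 < Real.sin θ :=
      Real.sin_pos_of_pos_of_lt_pi hθ0 (by linarith only [Real.pi_gt_three, hθ1])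
    have hsεpos : 0 < Real.sin (ε / 2) :=
      Real.sin_pos_of_pos_of_lt_pi (by linarith only [hε0])
        (by linarith only [Real.pi_gt_three, hε4])
    have hs_ub : Real.sin (θ / 2) ≤ ε :=
      le_trans (le_of_lt (Real.sin_lt (by linarith only [hθ0]))) (by linarith only [hθ2])
    have hs_lb : ε / 4 ≤ Real.sin (θ / 2) := by
      have h := half_le_sin (x := θ / 2) (by linarith only [hθ0]) (by linarith only [hθ1])
      linarith only [h, hcase]
    have hsε_ub : Real.sin (ε / 2) ≤ ε :=
      le_trans (le_of_lt (Real.sin_lt (by linarith only [hε0]))) (by linarith only [hε0])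
    have hsε_lb : ε / 4 ≤ Real.sin (ε / 2) := by
      have h := half_le_sin (x := ε / 2) (by linarith only [hε0]) (by linarith only [hε4])
      linarith only [h]
    have hsθ_lb : ε / 2 ≤ Real.sin θ := by
      have h := half_le_sin (x := θ) (le_of_lt hθ0) (le_of_lt hθ1)
      linarith only [h, hcase]
    have hlog4 : Real.log 4 ≤ 2 := log_four_le_two
    have hLval : L = -Real.log ε := abs_of_nonpos (by linarith)
    have hL0 : (0 : ℝ) ≤ L := abs_nonneg _
    have hlogbound : ∀ x : ℝ, 0 < x → ε / 4 ≤ x → x ≤ ε → |2 * Real.log x| ≤ 6 * L := by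
      intro x hx h1 h2
      have hub : Real.log x ≤ Real.log ε := Real.log_le_log hx h2
      have hlb : Real.log ε - Real.log 4 ≤ Real.log x := by
        have h3 : Real.log (ε / 4) ≤ Real.log x := Real.log_le_log (by linarith) h1
        rwa [Real.log_div hε0.ne' (by norm_num)] at h3
      rw [abs_mul, abs_of_nonneg (by norm_num : (0:ℝ) ≤ 2),
        abs_of_nonpos (by linarith only [hub, hlogε])]
      linarith only [hLval, hL1, hub, hlb, hlog4]
    have hWb : |Wv| ≤ 6 * L := hlogbound _ hspos hs_lb hs_ub
    have hcb : |cv| ≤ 6 * L := hlogbound _ hsεpos hsε_lb hsε_ub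
    have habs1ε : |(1 : ℝ) / ε| = ε⁻¹ := by
      rw [abs_div, abs_one, abs_of_pos hε0, one_div]
    have hd1b : |d1| ≤ M * ε⁻¹ := by
      rw [hd1def, abs_mul, habs1ε]
      exact mul_le_mul_of_nonneg_right (hM _).1 (le_of_lt hεinv)
    have hd2b : |d2| ≤ M * ε⁻¹ ^ 2 := by
      rw [hd2def, abs_mul, abs_mul, habs1ε]
      calc |deriv (deriv g) (θ / ε)| * ε⁻¹ * ε⁻¹ ≤ M * ε⁻¹ * ε⁻¹ :=
            mul_le_mul_of_nonneg_right
              (mul_le_mul_of_nonneg_right (hM _).2 hεinv.le) hεinv.le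
        _ = M * ε⁻¹ ^ 2 := by ring
    have hεinv_mul : ε⁻¹ * ε = 1 := inv_mul_cancel₀ (ne_of_gt hε0)
    have hW1b : |W1v| ≤ 4 * ε⁻¹ := by
      rw [hW1def, abs_div, abs_of_pos hspos, div_le_iff₀ hspos]
      have h1 := Real.abs_cos_le_one (θ / 2)
      linarith only [h1, mul_le_mul_of_nonneg_left hs_lb hεinv.le, hεinv_mul]
    have hW2b : |W2v| ≤ 8 * ε⁻¹ ^ 2 := by
      rw [hW2def, abs_neg, abs_of_pos (by positivity), div_le_iff₀ (by positivity)]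
      have hss : (ε / 4) ^ 2 ≤ Real.sin (θ / 2) ^ 2 := by
        nlinarith only [hs_lb, hspos, hε0]
      have h2 : ε⁻¹ ^ 2 * ε ^ 2 = 1 := by field_simp
      linarith only [mul_le_mul_of_nonneg_left hss
        (by positivity : (0:ℝ) ≤ 16 * ε⁻¹ ^ 2), h2]
    have hctb : |ct| ≤ 2 * ε⁻¹ := by
      rw [hctdef, abs_div, abs_of_pos hsθpos, div_le_iff₀ hsθpos]
      have h1 := Real.abs_cos_le_one θ
      linarith only [h1, mul_le_mul_of_nonneg_left hsθ_lb hεinv.le, hεinv_mul]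
    have hGb : |1 - Gv| ≤ 1 := by
      have h := hgb (θ / ε)
      rw [abs_le]
      constructor <;> [linarith only [h.2]; linarith only [h.1]]
    have hab : |1 + ε| ≤ 2 := by rw [abs_of_pos (by linarith)]; linarith
    have hnd1b : |-d1| ≤ M * ε⁻¹ := by rwa [abs_neg]
    have hnd2b : |-d2| ≤ M * ε⁻¹ ^ 2 := by rwa [abs_neg]
    have hMε0 : (0 : ℝ) ≤ M * ε⁻¹ := mul_nonneg hM0 hεinv.le
    have hMε20 : (0 : ℝ) ≤ M * ε⁻¹ ^ 2 := mul_nonneg hM0 (by positivity)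
    -- term-by-term bounds
    have e1 : |-d1 * ((1 + ε) * Wv)| ≤ M * ε⁻¹ * (2 * (6 * L)) :=
      abs_mul_le hnd1b (abs_mul_le hab hWb)
    have e2 : |(1 - Gv) * ((1 + ε) * W1v)| ≤ 1 * (2 * (4 * ε⁻¹)) :=
      abs_mul_le hGb (abs_mul_le hab hW1b)
    have e3 : |d1 * ((1 + ε) * cv)| ≤ M * ε⁻¹ * (2 * (6 * L)) :=
      abs_mul_le hd1b (abs_mul_le hab hcb)
    have q1 : |-d2 * ((1 + ε) * Wv)| ≤ M * ε⁻¹ ^ 2 * (2 * (6 * L)) :=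
      abs_mul_le hnd2b (abs_mul_le hab hWb)
    have q2 : |-d1 * ((1 + ε) * W1v)| ≤ M * ε⁻¹ * (2 * (4 * ε⁻¹)) :=
      abs_mul_le hnd1b (abs_mul_le hab hW1b)
    have q4 : |(1 - Gv) * ((1 + ε) * W2v)| ≤ 1 * (2 * (8 * ε⁻¹ ^ 2)) :=
      abs_mul_le hGb (abs_mul_le hab hW2b)
    have q5 : |d2 * ((1 + ε) * cv)| ≤ M * ε⁻¹ ^ 2 * (2 * (6 * L)) :=
      abs_mul_le hd2b (abs_mul_le hab hcb)
    have tri3 : ∀ p q r : ℝ, |-(p + q) - r| ≤ |p| + |q| + |r| := by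
      intro p q r
      have h : -(p + q) - r = -(p + (q + r)) := by ring
      rw [h, abs_neg]
      have h1 := abs_add_le p (q + r)
      have h2 := abs_add_le q r
      linarith
    have tri5 : ∀ p1 p2 p3 p4 p5 : ℝ,
        |-(p1 + p2 + (p3 + p4)) - p5| ≤ |p1| + |p2| + |p3| + |p4| + |p5| := by
      intro p1 p2 p3 p4 p5
      have h : -(p1 + p2 + (p3 + p4)) - p5 = -(p1 + (p2 + (p3 + (p4 + p5)))) := by ring
      rw [h, abs_neg]
      have h1 := abs_add_le p1 (p2 + (p3 + (p4 + p5)))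
      have h2 := abs_add_le p2 (p3 + (p4 + p5))
      have h3 := abs_add_le p3 (p4 + p5)
      have h4 := abs_add_le p4 p5
      linarith
    have hsq : ε⁻¹ * ε⁻¹ = ε⁻¹ ^ 2 := (sq ε⁻¹).symm
    have hU1b : |-(-d1 * ((1 + ε) * Wv) + (1 - Gv) * ((1 + ε) * W1v)) - d1 * ((1 + ε) * cv)|
        ≤ 24 * (M + 1) * L * ε⁻¹ := by
      refine le_trans (tri3 _ _ _) ?_
      have ha : ε⁻¹ ≤ L * ε⁻¹ := by
        linarith only [mul_le_mul_of_nonneg_right hL1 hεinv.le]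
      have hb : (0:ℝ) ≤ M * L * ε⁻¹ := mul_nonneg (mul_nonneg hM0 hL0) hεinv.le
      have hcc : (0:ℝ) ≤ L * ε⁻¹ := mul_nonneg hL0 hεinv.le
      linarith only [e1, e2, e3, ha, hb, hcc]
    have hU2b : |-(-d2 * ((1 + ε) * Wv) + -d1 * ((1 + ε) * W1v)
            + (-d1 * ((1 + ε) * W1v) + (1 - Gv) * ((1 + ε) * W2v))) - d2 * ((1 + ε) * cv)|
        ≤ 40 * (M + 1) * L * ε⁻¹ ^ 2 := by
      refine le_trans (tri5 _ _ _ _ _) ?_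
      have he2 : (0:ℝ) ≤ ε⁻¹ ^ 2 := by positivity
      have ha : (0:ℝ) ≤ M * (L - 1) * ε⁻¹ ^ 2 :=
        mul_nonneg (mul_nonneg hM0 (by linarith)) he2
      have hb : (0:ℝ) ≤ (L - 1) * ε⁻¹ ^ 2 := mul_nonneg (by linarith) he2
      have hcc : (0:ℝ) ≤ M * L * ε⁻¹ ^ 2 := mul_nonneg (mul_nonneg hM0 hL0) he2
      have hdd : (0:ℝ) ≤ L * ε⁻¹ ^ 2 := mul_nonneg hL0 he2
      linarith only [q1, q2, q4, q5, ha, hb, hcc, hdd]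
    refine le_trans (abs_add_le _ _) ?_
    have hctU1 : |ct * (-(-d1 * ((1 + ε) * Wv) + (1 - Gv) * ((1 + ε) * W1v))
          - d1 * ((1 + ε) * cv))| ≤ 2 * ε⁻¹ * (24 * (M + 1) * L * ε⁻¹) :=
      abs_mul_le hctb hU1b
    have hfin : (0:ℝ) ≤ (M + 1) * L * ε⁻¹ ^ 2 :=
      mul_nonneg (mul_nonneg (by linarith) hL0) (by positivity)
    linarith only [hU2b, hctU1, hfin]
end
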